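/- Let E be a partially ordered set equipped with an involution A ↦ A* satisfying A** = A, A* ≠ A, and A ≤ B implies B* ≤ A*. Let V be an ultrafilter on E (for every A ∈ E exactly one of A, A* lies in V, and V is upward closed). Suppose A ∈ V is a minimal element of V (every B ∈ V with B ≤ A equals A) and that A* ≤ A does not hold. Then the set W = (V \ {A}) ∪ {A*} is again an ultrafilter on E. -/
import Mathlib


theorem ultrafilter_swap_at_minimal {E : Type*} [PartialOrder E] (star : E → E)
    (hInv : ∀ A, star (star A) = A) (hNe : ∀ A, star A ≠ A)
    (hAnti : ∀ A B : E, A ≤ B → star B ≤ star A)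
    (V : Set E)
    (hV1 : ∀ A : E, Xor' (A ∈ V) (star A ∈ V))
    (hV2 : ∀ A ∈ V, ∀ B : E, A ≤ B → B ∈ V)
    (A : E) (hA : A ∈ V)
    (hmin : ∀ B ∈ V, B ≤ A → B = A)
    (hstar : ¬ star A ≤ A) :
    (∀ C : E, Xor' (C ∈ (V \ {A}) ∪ {star A}) (star C ∈ (V \ {A}) ∪ {star A})) ∧
    (∀ C ∈ (V \ {A}) ∪ {star A}, ∀ B : E, C ≤ B → B ∈ (V \ {A}) ∪ {star A}) := by
  have hsA : star A ∉ V := by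
    rcases hV1 A with h | h
    · exact h.2
    · exact absurd hA h.2
  have hAW : A ∉ (V \ {A}) ∪ {star A} := by
    rintro (⟨_, h⟩ | h)
    · exact h rfl
    · exact hNe A (h.symm)
  have hsAW : star A ∈ (V \ {A}) ∪ {star A} := Or.inr rfl
  constructor
  · intro C
    by_cases hCA : C = A
    · subst hCA
      exact Or.inr ⟨hsAW, hAW⟩
    by_cases hCsA : C = star A
    · subst hCsA
      rw [hInv]
      exact Or.inl ⟨hsAW, hAW⟩
    · have hsCA : star C ≠ A := fun h => hCsA (by rw [← h, hInv])
      have hsCsA : star C ≠ star A := fun h => hCA (by rw [← hInv C, h, hInv])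
      have hCW : C ∈ (V \ {A}) ∪ {star A} ↔ C ∈ V := by
        constructor
        · rintro (⟨h, _⟩ | h)
          · exact h
          · exact absurd h hCsA
        · exact fun h => Or.inl ⟨h, hCA⟩
      have hsCW : star C ∈ (V \ {A}) ∪ {star A} ↔ star C ∈ V := by
        constructor
        · rintro (⟨h, _⟩ | h)
          · exact h
          · exact absurd h hsCsA
        · exact fun h => Or.inl ⟨h, hsCA⟩
      rcases hV1 C with ⟨h1, h2⟩ | ⟨h1, h2⟩
      · exact Or.inl ⟨hCW.mpr h1, fun h => h2 (hsCW.mp h)⟩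
      · exact Or.inr ⟨hsCW.mpr h1, fun h => h2 (hCW.mp h)⟩
  · rintro C (⟨hCV, hCA⟩ | hC) B hCB
    · have hBV : B ∈ V := hV2 C hCV B hCB
      refine Or.inl ⟨hBV, fun hBA => ?_⟩
      apply hCA
      have : C = A := hmin C hCV (hBA ▸ hCB)
      exact this
    · have hC' : C = star A := hC
      subst hC'
      have h1 : star B ≤ A := by
        have := hAnti _ _ hCB
        rwa [hInv] at this
      by_cases hsB : star B ∈ V
      · have : star B = A := hmin _ hsB h1
        have : B = star A := by rw [← hInv B, this]
        exact Or.inr this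
      · have hBV : B ∈ V := by
          rcases hV1 B with h | h
          · exact h.1
          · exact absurd h.1 hsB
        refine Or.inl ⟨hBV, fun hBA => ?_⟩
        exact hstar (hBA ▸ hCB)
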